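/- arXiv:nlin/0408060 — 4 statements merged into one kernel-verified Lean document; each statement's English description precedes it below -/
import Mathlib

section
/- Jacobi's identity for minors: for an n×n matrix A over a commutative ring with n ≥ 2, det(A) · det(A with rows and columns 1 and n removed) = det(A with row and column 1 removed) · det(A with row and column n removed) − det(A with row 1 and column n removed) · det(A with row n and column 1 removed) — more precisely, ξ^{1..n}_{1..n} ξ^{2..n−1}_{2..n−1} = ξ^{2..n}_{2..n} ξ^{1..n−1}_{1..n−1} − ξ^{1..n−1}_{2..n} ξ^{2..n}_{1..n−1}. -/
open Finset

noncomputable section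

/-- The minor ξ^P_Q(A) of a square matrix: the determinant of the submatrix of `A`
with rows `P` and columns `Q`, each taken in increasing order (0 if `P.card ≠ Q.card`). -/
def minor {n : ℕ} {α : Type*} [CommRing α] (A : Matrix (Fin n) (Fin n) α)
    (P Q : Finset (Fin n)) : α :=
  if h : P.card = Q.card then
    Matrix.det (Matrix.of fun i j : Fin P.card =>
      A (P.orderEmbOfFin rfl i) (Q.orderEmbOfFin h.symm j))
  else 0

/-- ε(K₁;K₂) = (−1)^{#{(i,j) ∈ K₁×K₂ : i > j}}. -/
def epsSign {n : ℕ} (K1 K2 : Finset (Fin n)) : ℤ :=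
  (-1) ^ ((K1 ×ˢ K2).filter fun p => p.2 < p.1).card

/-!
For `M` indexed by `ι ⊕ κ`, multiply `M` by the matrix whose `ι`-columns are those of `adj M`
and whose `κ`-columns are those of the identity. Since `M * adj M = det M • 1`, the product is
block upper triangular with diagonal blocks `det M • 1` and `M₂₂`, so
`det M * det (adj M)₁₁ = det M ^ |ι| * det M₂₂`. Cancelling `det M` is legitimate for the generic
matrix over `ℤ[Xᵢⱼ]`, and the resulting polynomial identity specialises to every commutative ring.
Taking `ι` to be the first and last index of `Fin (m + 2)`, the entries of `(adj M)₁₁` are the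
four corner cofactors, i.e. signed minors with one row and one column deleted.
-/

theorem minor_eq_det_submatrix {n k : ℕ} {α : Type*} [CommRing α] (A : Matrix (Fin n) (Fin n) α)
    {P Q : Finset (Fin n)} (hP : #P = k) (hQ : #Q = k) {f g : Fin k → Fin n}
    (hf : StrictMono f) (hg : StrictMono g) (hfP : ∀ i, f i ∈ P) (hgQ : ∀ j, g j ∈ Q) :
    minor A P Q = (A.submatrix f g).det := by
  subst hP
  obtain rfl : f = P.orderEmbOfFin rfl := Finset.orderEmbOfFin_unique rfl hfP hf
  obtain rfl : g = Q.orderEmbOfFin hQ := Finset.orderEmbOfFin_unique hQ hgQ hg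
  rw [minor, dif_pos hQ.symm]
  rfl

namespace Matrix

variable {ι κ α : Type*} [Fintype ι] [Fintype κ] [DecidableEq ι] [DecidableEq κ] [CommRing α]

theorem det_mul_det_toBlocks₁₁_adjugate (M : Matrix (ι ⊕ κ) (ι ⊕ κ) α) :
    M.det * M.adjugate.toBlocks₁₁.det = M.det ^ Fintype.card ι * M.toBlocks₂₂.det := by
  let C := fromBlocks M.adjugate.toBlocks₁₁ 0 M.adjugate.toBlocks₂₁ (1 : Matrix κ κ α)
  have hleft (x j) : (M * C) x (Sum.inl j) = (M * M.adjugate) x (Sum.inl j) := by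
    simp [C, mul_apply, Fintype.sum_sum_type, toBlocks₁₁, toBlocks₂₁]
  have hright (x j) : (M * C) x (Sum.inr j) = M x (Sum.inr j) := by
    simp [C, mul_apply, Fintype.sum_sum_type, one_apply]
  have hMC : M * C = fromBlocks (M.det • 1) M.toBlocks₁₂ 0 M.toBlocks₂₂ := by
    ext (x | x) (j | j) <;> simp [hleft, hright, mul_adjugate, one_apply, toBlocks₁₂, toBlocks₂₂]
  calc M.det * M.adjugate.toBlocks₁₁.det = (M * C).det := by
        rw [det_mul, det_fromBlocks_zero₁₂, det_one, mul_one]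
    _ = _ := by rw [hMC, det_fromBlocks_zero₂₁, det_smul, det_one, mul_one]

theorem det_toBlocks₁₁_adjugate [Nonempty ι] (M : Matrix (ι ⊕ κ) (ι ⊕ κ) α) :
    M.adjugate.toBlocks₁₁.det = M.det ^ (Fintype.card ι - 1) * M.toBlocks₂₂.det := by
  let X := mvPolynomialX (ι ⊕ κ) (ι ⊕ κ) ℤ
  have hX : X.adjugate.toBlocks₁₁.det = X.det ^ (Fintype.card ι - 1) * X.toBlocks₂₂.det := by
    refine mul_left_cancel₀ (det_mvPolynomialX_ne_zero _ ℤ) ?_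
    rw [det_mul_det_toBlocks₁₁_adjugate, ← mul_assoc, ← pow_succ',
      Nat.sub_add_cancel Fintype.card_pos]
  let f := MvPolynomial.aeval (R := ℤ) fun p : (ι ⊕ κ) × (ι ⊕ κ) => M p.1 p.2
  have hfX : f.mapMatrix X = M := mvPolynomialX_mapMatrix_aeval ℤ M
  have hfX' := congrArg f hX
  simp only [map_mul, map_pow, AlgHom.map_det] at hfX'
  change (f.mapMatrix X.adjugate).toBlocks₁₁.det =
    (f.mapMatrix X).det ^ _ * (f.mapMatrix X).toBlocks₂₂.det at hfX'
  rwa [AlgHom.map_adjugate, hfX] at hfX'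

end Matrix

def finEndsSumMiddleEquiv (m : ℕ) : Fin 2 ⊕ Fin m ≃ Fin (m + 2) :=
  Equiv.ofBijective (Sum.elim ![0, Fin.last (m + 1)] fun p => p.castSucc.succ) <| by
    refine (Fintype.bijective_iff_injective_and_card _).mpr ⟨?_, by simp [add_comm]⟩
    rintro (a | a) (b | b) h <;> (try fin_cases a) <;> (try fin_cases b) <;>
      simp_all [Fin.ext_iff] <;> omega

theorem Matrix.desnanot_jacobi_adjugate {m : ℕ} {α : Type*} [CommRing α]
    (A : Matrix (Fin (m + 2)) (Fin (m + 2)) α) :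
    A.adjugate 0 0 * A.adjugate (Fin.last (m + 1)) (Fin.last (m + 1)) -
        A.adjugate 0 (Fin.last (m + 1)) * A.adjugate (Fin.last (m + 1)) 0 =
      A.det * (A.submatrix (fun p : Fin m => p.castSucc.succ) fun p => p.castSucc.succ).det := by
  have h :=
    (A.submatrix (finEndsSumMiddleEquiv m) (finEndsSumMiddleEquiv m)).det_toBlocks₁₁_adjugate
  rw [Matrix.adjugate_submatrix_equiv_self, Matrix.det_submatrix_equiv_self,
    Matrix.det_fin_two] at h
  simp only [finEndsSumMiddleEquiv, Equiv.coe_ofBijective, Matrix.toBlocks₁₁, Matrix.toBlocks₂₂,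
    Matrix.submatrix_apply, Matrix.of_apply, Sum.elim_inl, Sum.elim_inr, Matrix.cons_val_zero,
    Matrix.cons_val_one, Matrix.cons_val_fin_one, Fintype.card_fin, Nat.add_one_sub_one,
    pow_one] at h
  exact h

theorem desnanot_jacobi {m : ℕ} {α : Type*} [CommRing α]
    (A : Matrix (Fin (m + 2)) (Fin (m + 2)) α) :
    minor A univ univ * minor A (univ \ {0, Fin.last (m + 1)}) (univ \ {0, Fin.last (m + 1)}) =
      minor A (univ \ {0}) (univ \ {0}) *
          minor A (univ \ {Fin.last (m + 1)}) (univ \ {Fin.last (m + 1)}) -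
        minor A (univ \ {Fin.last (m + 1)}) (univ \ {0}) *
          minor A (univ \ {0}) (univ \ {Fin.last (m + 1)}) := by
  have hcard₀ : #(univ \ {(0 : Fin (m + 2))}) = m + 1 := by rw [card_univ_sdiff]; simp
  have hcardₗ : #(univ \ {Fin.last (m + 1)}) = m + 1 := by rw [card_univ_sdiff]; simp
  have hcard₀ₗ : #(univ \ {0, Fin.last (m + 1)}) = m := by
    rw [card_univ_sdiff]; simp [Fin.ext_iff]
  have hmem₀ (i : Fin (m + 1)) : i.succ ∈ univ \ {0} := by simp [Fin.succ_ne_zero]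
  have hmemₗ (i : Fin (m + 1)) : i.castSucc ∈ univ \ {Fin.last (m + 1)} := by
    simp [Fin.castSucc_ne_last]
  have hmem₀ₗ (i : Fin m) : i.castSucc.succ ∈ univ \ {0, Fin.last (m + 1)} := by
    simp [Fin.ext_iff]; omega
  have hmid : StrictMono fun i : Fin m => i.castSucc.succ :=
    Fin.strictMono_succ.comp Fin.strictMono_castSucc
  rw [minor_eq_det_submatrix A (card_fin _) (card_fin _) strictMono_id strictMono_id
      (fun _ => mem_univ _) (fun _ => mem_univ _),
    minor_eq_det_submatrix A hcard₀ₗ hcard₀ₗ hmid hmid hmem₀ₗ hmem₀ₗ,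
    minor_eq_det_submatrix A hcard₀ hcard₀ Fin.strictMono_succ Fin.strictMono_succ hmem₀ hmem₀,
    minor_eq_det_submatrix A hcardₗ hcardₗ Fin.strictMono_castSucc Fin.strictMono_castSucc
      hmemₗ hmemₗ,
    minor_eq_det_submatrix A hcardₗ hcard₀ Fin.strictMono_castSucc Fin.strictMono_succ hmemₗ hmem₀,
    minor_eq_det_submatrix A hcard₀ hcardₗ Fin.strictMono_succ Fin.strictMono_castSucc hmem₀ hmemₗ]
  have h := A.desnanot_jacobi_adjugate
  simp only [Matrix.adjugate_fin_succ_eq_det_submatrix, Fin.succAbove_zero, Fin.succAbove_last,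
    Fin.val_zero, Fin.val_last, add_zero, zero_add, pow_zero, one_mul, ← two_mul, pow_mul,
    neg_one_sq, one_pow] at h
  have hsign : (-1 : α) ^ (m + 1) * (-1) ^ (m + 1) = 1 := by
    rw [← mul_pow, neg_mul_neg, one_mul, one_pow]
  rw [Matrix.submatrix_id_id]
  linear_combination -h - (A.submatrix Fin.castSucc Fin.succ).det *
    (A.submatrix Fin.succ Fin.castSucc).det * hsign

/-- Jacobi's identity
ξ^{1..n}_{1..n} ξ^{2..n−1}_{2..n−1}
  = ξ^{2..n}_{2..n} ξ^{1..n−1}_{1..n−1} − ξ^{1..n−1}_{2..n} ξ^{2..n}_{1..n−1}. -/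
theorem stmt7 {n : ℕ} {α : Type*} [CommRing α] (hn : 2 ≤ n)
    (A : Matrix (Fin n) (Fin n) α) :
    minor A Finset.univ Finset.univ *
        minor A (Finset.univ \ {⟨0, by omega⟩, ⟨n - 1, by omega⟩})
          (Finset.univ \ {⟨0, by omega⟩, ⟨n - 1, by omega⟩}) =
      minor A (Finset.univ \ {⟨0, by omega⟩}) (Finset.univ \ {(⟨0, by omega⟩ : Fin n)}) *
          minor A (Finset.univ \ {⟨n - 1, by omega⟩}) (Finset.univ \ {(⟨n - 1, by omega⟩ : Fin n)}) -
        minor A (Finset.univ \ {⟨n - 1, by omega⟩}) (Finset.univ \ {(⟨0, by omega⟩ : Fin n)}) *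
          minor A (Finset.univ \ {⟨0, by omega⟩}) (Finset.univ \ {(⟨n - 1, by omega⟩ : Fin n)}) := by
  obtain ⟨m, rfl⟩ : ∃ m, n = m + 2 := ⟨n - 2, by omega⟩
  exact desnanot_jacobi A
end
end

section
/- Under the change of variables s_i = ξ_i/(ξ_i − 1), the differential operator (∑_i (s_i−1) ∂/∂s_i − 1)(∑_j s_j(s_j−1) ∂/∂s_j) equals (A − B + 1)A, where A = ∑_i ξ_i ∂/∂ξ_i and B = ∑_i ∂/∂ξ_i. -/
open Finset

noncomputable section

/-- Partial derivative ∂f/∂ξᵢ of a function of ξ₁,…,ξ_N. -/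
def pd {N : ℕ} (i : Fin N) (f : (Fin N → ℝ) → ℝ) : (Fin N → ℝ) → ℝ :=
  fun ξ => fderiv ℝ f ξ (Pi.single i 1)

/-- The Euler operator A = ∑ᵢ ξᵢ ∂/∂ξᵢ. -/
def opA {N : ℕ} (f : (Fin N → ℝ) → ℝ) : (Fin N → ℝ) → ℝ :=
  fun ξ => ∑ i, ξ i * pd i f ξ

/-- The operator B = ∑ᵢ ∂/∂ξᵢ. -/
def opB {N : ℕ} (f : (Fin N → ℝ) → ℝ) : (Fin N → ℝ) → ℝ :=
  fun ξ => ∑ i, pd i f ξ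

/-- X = ψ(A − B). -/
def opX {N : ℕ} (ψ f : (Fin N → ℝ) → ℝ) : (Fin N → ℝ) → ℝ :=
  fun ξ => ψ ξ * (opA f ξ - opB f ξ)

/-- Y = ψA. -/
def opY {N : ℕ} (ψ f : (Fin N → ℝ) → ℝ) : (Fin N → ℝ) → ℝ :=
  fun ξ => ψ ξ * opA f ξ

variable {N : ℕ}

def Tm (ξ : Fin N → ℝ) : Fin N → ℝ := fun i => ξ i / (ξ i - 1)

def Lm (ξ : Fin N → ℝ) : (Fin N → ℝ) →L[ℝ] (Fin N → ℝ) :=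
  ContinuousLinearMap.pi fun j => (-(((ξ j) - 1) ^ 2)⁻¹) • ContinuousLinearMap.proj j

lemma hasDerivAt_phi {x : ℝ} (hx : x ≠ 1) :
    HasDerivAt (fun y : ℝ => y / (y - 1)) (-((x - 1) ^ 2)⁻¹) x := by
  have hx' : x - 1 ≠ 0 := sub_ne_zero.mpr hx
  have h := (hasDerivAt_id x).div ((hasDerivAt_id x).sub_const 1) hx'
  convert h using 1
  · rfl
  · rfl
  · funext y; simp [id]
  · simp only [id]; field_simp; ring

lemma hasFDerivAt_Tm {ξ : Fin N → ℝ} (hξ : ∀ i, ξ i ≠ 1) :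
    HasFDerivAt (Tm (N := N)) (Lm ξ) ξ := by
  rw [hasFDerivAt_pi']
  intro i
  have h1 : HasFDerivAt (fun ξ' : Fin N → ℝ => ξ' i)
      (ContinuousLinearMap.proj i : (Fin N → ℝ) →L[ℝ] ℝ) ξ :=
    (ContinuousLinearMap.proj (R := ℝ) (φ := fun _ : Fin N => ℝ) i).hasFDerivAt
  have := (hasDerivAt_phi (hξ i)).comp_hasFDerivAt ξ h1
  exact this


lemma Lm_single (ξ : Fin N → ℝ) (i : Fin N) :
    Lm ξ (Pi.single i 1) = Pi.single i (-((ξ i - 1) ^ 2)⁻¹) := by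
  ext j
  simp [Lm, Pi.single_apply]
  by_cases h : j = i <;> simp [h]

lemma fderiv_single_smul (u : (Fin N → ℝ) → ℝ) (x : Fin N → ℝ) (i : Fin N) (c : ℝ) :
    fderiv ℝ u x (Pi.single i c) = c * pd i u x := by
  have : (Pi.single i c : Fin N → ℝ) = c • (Pi.single i 1 : Fin N → ℝ) := by
    ext j; simp [Pi.single_apply]
  rw [this, map_smul, pd]; rfl

lemma pd_comp_T {u : (Fin N → ℝ) → ℝ} {ξ : Fin N → ℝ}
    (hu : DifferentiableAt ℝ u (Tm ξ)) (hξ : ∀ i, ξ i ≠ 1) (i : Fin N) :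
    pd i (fun ξ' => u (Tm ξ')) ξ = (-((ξ i - 1) ^ 2)⁻¹) * pd i u (Tm ξ) := by
  have h := (hu.hasFDerivAt.comp ξ (hasFDerivAt_Tm hξ))
  have h' : HasFDerivAt (fun ξ' => u (Tm ξ'))
      ((fderiv ℝ u (Tm ξ)).comp (Lm ξ)) ξ := h
  rw [pd, h'.fderiv]
  simp only [ContinuousLinearMap.comp_apply, Lm_single]
  exact fderiv_single_smul u (Tm ξ) i _

lemma pd_contDiff {f : (Fin N → ℝ) → ℝ} (hf : ContDiff ℝ (⊤ : ℕ∞) f) (i : Fin N) :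
    ContDiff ℝ (⊤ : ℕ∞) (pd i f) :=
  (hf.fderiv_right (by simp)).clm_apply contDiff_const

lemma isOpen_U : IsOpen {ξ' : Fin N → ℝ | ∀ i, ξ' i ≠ 1} := by
  have : {ξ' : Fin N → ℝ | ∀ i, ξ' i ≠ 1} = ⋂ i, (fun ξ' : Fin N → ℝ => ξ' i) ⁻¹' {(1:ℝ)}ᶜ := by
    ext x; simp [Set.mem_iInter]
  rw [this]
  exact isOpen_iInter_of_finite fun i => isOpen_compl_singleton.preimage (continuous_apply i)


lemma hasDerivAt_psi {x : ℝ} (hx : x ≠ 1) :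
    HasDerivAt (fun y : ℝ => y * (-((y - 1) ^ 2)⁻¹)) ((x + 1) / (x - 1) ^ 3) x := by
  have hx' : x - 1 ≠ 0 := sub_ne_zero.mpr hx
  have h2 : ((x - 1) ^ 2 : ℝ) ≠ 0 := pow_ne_zero 2 hx'
  have hinv := (((hasDerivAt_id x).sub_const 1).pow 2).inv h2
  have h := (hasDerivAt_id x).mul hinv.neg
  convert h using 1
  · rfl
  · rfl
  · funext y; simp [id]
  · simp only [id, Pi.pow_apply, Pi.neg_apply, Pi.inv_apply]; field_simp; ring

lemma pd_F {f : (Fin N → ℝ) → ℝ} (hf : ContDiff ℝ (⊤ : ℕ∞) f) {ξ : Fin N → ℝ}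
    (hξ : ∀ i, ξ i ≠ 1) (j : Fin N) :
    pd j (fun ξ' => ∑ i, ξ' i * (-((ξ' i - 1) ^ 2)⁻¹) * pd i f (Tm ξ')) ξ =
      ((ξ j + 1) / (ξ j - 1) ^ 3) * pd j f (Tm ξ) +
      ∑ i, ξ i * (-((ξ i - 1) ^ 2)⁻¹) * ((-((ξ j - 1) ^ 2)⁻¹) * pd j (pd i f) (Tm ξ)) := by
  have hq : ∀ i : Fin N, HasFDerivAt (fun ξ' : Fin N → ℝ => ξ' i * (-((ξ' i - 1) ^ 2)⁻¹))
      (((ξ i + 1) / (ξ i - 1) ^ 3) • (ContinuousLinearMap.proj i : (Fin N → ℝ) →L[ℝ] ℝ)) ξ := by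
    intro i
    have h1 : HasFDerivAt (fun ξ' : Fin N → ℝ => ξ' i)
        (ContinuousLinearMap.proj i : (Fin N → ℝ) →L[ℝ] ℝ) ξ :=
      (ContinuousLinearMap.proj (R := ℝ) (φ := fun _ : Fin N => ℝ) i).hasFDerivAt
    exact (hasDerivAt_psi (hξ i)).comp_hasFDerivAt ξ h1
  have hr : ∀ i : Fin N, HasFDerivAt (fun ξ' : Fin N → ℝ => pd i f (Tm ξ'))
      ((fderiv ℝ (pd i f) (Tm ξ)).comp (Lm ξ)) ξ := fun i =>
    (((pd_contDiff hf i).differentiable (by simp)) (Tm ξ)).hasFDerivAt.comp ξ (hasFDerivAt_Tm hξ)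
  have hF : HasFDerivAt (fun ξ' : Fin N → ℝ => ∑ i, ξ' i * (-((ξ' i - 1) ^ 2)⁻¹) * pd i f (Tm ξ'))
      (∑ i, ((ξ i * (-((ξ i - 1) ^ 2)⁻¹)) • ((fderiv ℝ (pd i f) (Tm ξ)).comp (Lm ξ)) +
        (pd i f (Tm ξ)) • (((ξ i + 1) / (ξ i - 1) ^ 3) •
          (ContinuousLinearMap.proj i : (Fin N → ℝ) →L[ℝ] ℝ)))) ξ :=
    HasFDerivAt.fun_sum fun i _ => (hq i).mul (hr i)
  rw [pd, hF.fderiv]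
  rw [ContinuousLinearMap.sum_apply]
  have : ∀ i : Fin N,
      (((ξ i * (-((ξ i - 1) ^ 2)⁻¹)) • ((fderiv ℝ (pd i f) (Tm ξ)).comp (Lm ξ)) +
        (pd i f (Tm ξ)) • (((ξ i + 1) / (ξ i - 1) ^ 3) •
          (ContinuousLinearMap.proj i : (Fin N → ℝ) →L[ℝ] ℝ)))) (Pi.single j 1) =
      ξ i * (-((ξ i - 1) ^ 2)⁻¹) * ((-((ξ j - 1) ^ 2)⁻¹) * pd j (pd i f) (Tm ξ)) +
      (pd i f (Tm ξ)) * (((ξ i + 1) / (ξ i - 1) ^ 3) * (Pi.single j 1 : Fin N → ℝ) i) := by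
    intro i
    simp only [ContinuousLinearMap.add_apply, ContinuousLinearMap.smul_apply,
      ContinuousLinearMap.comp_apply, Lm_single, ContinuousLinearMap.proj_apply,
      smul_eq_mul]
    rw [fderiv_single_smul]
  rw [Finset.sum_congr rfl fun i _ => this i, Finset.sum_add_distrib]
  rw [add_comm]
  congr 1
  rw [Finset.sum_eq_single j]
  · simp [mul_comm]
  · intro i _ hij
    simp [Pi.single_apply, hij]
  · simp

lemma pd_V {f : (Fin N → ℝ) → ℝ} (hf : ContDiff ℝ (⊤ : ℕ∞) f) (s : Fin N → ℝ) (j : Fin N) :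
    pd j (fun s' => ∑ i, s' i * (s' i - 1) * pd i f s') s =
      (2 * s j - 1) * pd j f s + ∑ i, s i * (s i - 1) * pd j (pd i f) s := by
  have hq : ∀ i : Fin N, HasFDerivAt (fun s' : Fin N → ℝ => s' i * (s' i - 1))
      ((2 * s i - 1) • (ContinuousLinearMap.proj i : (Fin N → ℝ) →L[ℝ] ℝ)) s := by
    intro i
    have h1 : HasFDerivAt (fun s' : Fin N → ℝ => s' i)
        (ContinuousLinearMap.proj i : (Fin N → ℝ) →L[ℝ] ℝ) s :=
      (ContinuousLinearMap.proj (R := ℝ) (φ := fun _ : Fin N => ℝ) i).hasFDerivAt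
    have hp : HasDerivAt (fun y : ℝ => y * (y - 1)) (2 * s i - 1) (s i) := by
      have := (hasDerivAt_id (s i)).mul ((hasDerivAt_id (s i)).sub_const 1)
      convert this using 1
      · rfl
      · rfl
      · funext y; simp [id]
      · simp only [id]; ring
    exact hp.comp_hasFDerivAt s h1
  have hr : ∀ i : Fin N, HasFDerivAt (pd i f) (fderiv ℝ (pd i f) s) s := fun i =>
    (((pd_contDiff hf i).differentiable (by simp)) s).hasFDerivAt
  have hV : HasFDerivAt (fun s' : Fin N → ℝ => ∑ i, s' i * (s' i - 1) * pd i f s')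
      (∑ i, ((s i * (s i - 1)) • fderiv ℝ (pd i f) s +
        (pd i f s) • ((2 * s i - 1) • (ContinuousLinearMap.proj i : (Fin N → ℝ) →L[ℝ] ℝ)))) s :=
    HasFDerivAt.fun_sum fun i _ => (hq i).mul (hr i)
  rw [pd, hV.fderiv, ContinuousLinearMap.sum_apply]
  have : ∀ i : Fin N,
      ((s i * (s i - 1)) • fderiv ℝ (pd i f) s +
        (pd i f s) • ((2 * s i - 1) • (ContinuousLinearMap.proj i : (Fin N → ℝ) →L[ℝ] ℝ)))
        (Pi.single j 1) =
      s i * (s i - 1) * pd j (pd i f) s +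
      (pd i f s) * ((2 * s i - 1) * (Pi.single j 1 : Fin N → ℝ) i) := by
    intro i
    simp only [ContinuousLinearMap.add_apply, ContinuousLinearMap.smul_apply,
      ContinuousLinearMap.proj_apply, smul_eq_mul]
    rfl
  rw [Finset.sum_congr rfl fun i _ => this i, Finset.sum_add_distrib, add_comm]
  congr 1
  rw [Finset.sum_eq_single j]
  · simp [mul_comm]
  · intro i _ hij
    simp [Pi.single_apply, hij]
  · simp


theorem stmt12_aux {N : ℕ} (f : (Fin N → ℝ) → ℝ) (hf : ContDiff ℝ (⊤ : ℕ∞) f)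
    (ξ : Fin N → ℝ) (hξ : ∀ i, ξ i ≠ 1) :
    (∑ i, ξ i * pd i (opA (fun ξ'' => f (Tm ξ''))) ξ) -
      (∑ i, pd i (opA (fun ξ'' => f (Tm ξ''))) ξ) +
      (∑ i, ξ i * pd i (fun ξ'' => f (Tm ξ'')) ξ) =
    (∑ i, (Tm ξ i - 1) * pd i (fun s => ∑ j, s j * (s j - 1) * pd j f s) (Tm ξ)) -
      (∑ j, Tm ξ j * (Tm ξ j - 1) * pd j f (Tm ξ)) := by
  have hfd := hf.differentiable (by simp)
  set F := fun ξ' : Fin N → ℝ => ∑ i, ξ' i * (-((ξ' i - 1) ^ 2)⁻¹) * pd i f (Tm ξ') with hFdef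
  have hU : ∀ ξ' : Fin N → ℝ, (∀ i, ξ' i ≠ 1) → opA (fun ξ'' => f (Tm ξ'')) ξ' = F ξ' := by
    intro ξ' h
    unfold opA
    refine Finset.sum_congr rfl fun i _ => ?_
    rw [pd_comp_T (hfd (Tm ξ')) h i]
    ring
  have hmem : {ξ' : Fin N → ℝ | ∀ i, ξ' i ≠ 1} ∈ nhds ξ := isOpen_U.mem_nhds hξ
  have heq : opA (fun ξ'' => f (Tm ξ'')) =ᶠ[nhds ξ] F :=
    Filter.eventuallyEq_of_mem hmem fun ξ' h => hU ξ' h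
  have hpd : ∀ j, pd j (opA (fun ξ'' => f (Tm ξ''))) ξ = pd j F ξ := by
    intro j; unfold pd; rw [heq.fderiv_eq]
  have h3 : ∀ i, pd i (fun ξ'' => f (Tm ξ'')) ξ = (-((ξ i - 1) ^ 2)⁻¹) * pd i f (Tm ξ) :=
    fun i => pd_comp_T (hfd (Tm ξ)) hξ i
  have hL : (∑ i, ξ i * pd i (opA (fun ξ'' => f (Tm ξ''))) ξ) -
      (∑ i, pd i (opA (fun ξ'' => f (Tm ξ''))) ξ) +
      (∑ i, ξ i * pd i (fun ξ'' => f (Tm ξ'')) ξ) =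
      ∑ j, ((ξ j - 1) * pd j F ξ + (ξ j * (-((ξ j - 1) ^ 2)⁻¹)) * pd j f (Tm ξ)) := by
    rw [← Finset.sum_sub_distrib, ← Finset.sum_add_distrib]
    refine Finset.sum_congr rfl fun j _ => ?_
    rw [hpd j, h3 j]; ring
  have hR : (∑ i, (Tm ξ i - 1) * pd i (fun s => ∑ j, s j * (s j - 1) * pd j f s) (Tm ξ)) -
      (∑ j, Tm ξ j * (Tm ξ j - 1) * pd j f (Tm ξ)) =
      ∑ j, ((Tm ξ j - 1) * ((2 * Tm ξ j - 1) * pd j f (Tm ξ) +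
        ∑ i, Tm ξ i * (Tm ξ i - 1) * pd j (pd i f) (Tm ξ)) -
        Tm ξ j * (Tm ξ j - 1) * pd j f (Tm ξ)) := by
    rw [← Finset.sum_sub_distrib]
    refine Finset.sum_congr rfl fun j _ => ?_
    rw [pd_V hf (Tm ξ) j]
  rw [hL, hR]
  refine Finset.sum_congr rfl fun j _ => ?_
  rw [hFdef, pd_F hf hξ j]
  have hxj : ξ j - 1 ≠ 0 := sub_ne_zero.mpr (hξ j)
  have hS : (ξ j - 1) * ∑ i, ξ i * (-((ξ i - 1) ^ 2)⁻¹) *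
        ((-((ξ j - 1) ^ 2)⁻¹) * pd j (pd i f) (Tm ξ)) =
      (Tm ξ j - 1) * ∑ i, Tm ξ i * (Tm ξ i - 1) * pd j (pd i f) (Tm ξ) := by
    rw [Finset.mul_sum, Finset.mul_sum]
    refine Finset.sum_congr rfl fun i _ => ?_
    have hxi : ξ i - 1 ≠ 0 := sub_ne_zero.mpr (hξ i)
    simp only [Tm]
    field_simp
    ring
  have hc : (ξ j - 1) * ((ξ j + 1) / (ξ j - 1) ^ 3) + ξ j * (-((ξ j - 1) ^ 2)⁻¹) =
      (Tm ξ j - 1) * (2 * Tm ξ j - 1) - Tm ξ j * (Tm ξ j - 1) := by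
    simp only [Tm]
    field_simp
    ring
  linear_combination hS + pd j f (Tm ξ) * hc

/-- under sᵢ = ξᵢ/(ξᵢ−1), the operator
(∑ᵢ(sᵢ−1)∂/∂sᵢ − 1)(∑ⱼ sⱼ(sⱼ−1)∂/∂sⱼ) becomes (A−B+1)A. -/
theorem stmt12 {N : ℕ} (f : (Fin N → ℝ) → ℝ) (hf : ContDiff ℝ (⊤ : ℕ∞) f)
    (ξ : Fin N → ℝ) (hξ : ∀ i, ξ i ≠ 1) :
    opA (opA (fun ξ' => f (fun i => ξ' i / (ξ' i - 1)))) ξ -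
        opB (opA (fun ξ' => f (fun i => ξ' i / (ξ' i - 1)))) ξ +
        opA (fun ξ' => f (fun i => ξ' i / (ξ' i - 1))) ξ =
      (∑ i, ((ξ i / (ξ i - 1)) - 1) *
          pd i (fun s => ∑ j, s j * (s j - 1) * pd j f s) (fun i => ξ i / (ξ i - 1))) -
        (∑ j, (ξ j / (ξ j - 1)) * ((ξ j / (ξ j - 1)) - 1) *
          pd j f (fun i => ξ i / (ξ i - 1))) :=
  stmt12_aux f hf ξ hξ
end
end

section
/- (Plücker-type relation for universal characters, second identity) For integers u, v ≥ 1: S_{[(u+1)!,(v−1)!]} · S_{[(u−1)!,(v+1)!]} − S_{[u!,(v+2,v−1,...,1)]} · S_{[(u+2,u−1,...,1),v!]} + S_{[(u+2,u−1,...,1),(v+2,v−1,...,1)]} · S_{[u!,v!]} = 0, where k! = (k,k−1,...,1) and (k+2,k−1,...,1) is the staircase with top part increased by 2. -/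
open PowerSeries Finset MvPolynomial

noncomputable section

/-- The polynomial ring ℚ[x₁,x₂,…,y₁,y₂,…]: `Sum.inl n ↔ xₙ`, `Sum.inr n ↔ yₙ`. -/
abbrev R2 := MvPolynomial (ℕ ⊕ ℕ) ℚ

/-- Formal exponential of a power series (intended for series with zero constant term). -/
def expPS {A : Type*} [CommRing A] [Algebra ℚ A] (f : PowerSeries A) : PowerSeries A :=
  PowerSeries.mk fun n =>
    ∑ k ∈ Finset.range (n + 1), (k.factorial : ℚ)⁻¹ • (PowerSeries.coeff n (f ^ k))

/-- ξ(x,z) = ∑_{n ≥ 1} x_n z^n. -/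
def xiX : PowerSeries R2 :=
  PowerSeries.mk fun n => if n = 0 then 0 else MvPolynomial.X (Sum.inl n)

/-- ξ(y,z) = ∑_{n ≥ 1} y_n z^n. -/
def xiY : PowerSeries R2 :=
  PowerSeries.mk fun n => if n = 0 then 0 else MvPolynomial.X (Sum.inr n)

/-- p_n(x), defined by ∑_{n≥0} p_n(x) z^n = exp(ξ(x,z)). -/
def px (n : ℕ) : R2 := PowerSeries.coeff n (expPS xiX)

/-- q_n(y) = p_n(y). -/
def qy (n : ℕ) : R2 := PowerSeries.coeff n (expPS xiY)

/-- p_n for n ∈ ℤ, with p_{-n} = 0 for n > 0. -/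
def pzx (n : ℤ) : R2 := if n < 0 then 0 else px n.toNat

/-- q_n for n ∈ ℤ, with q_{-n} = 0 for n > 0. -/
def qzy (n : ℤ) : R2 := if n < 0 then 0 else qy n.toNat

/-- The universal character S_{[λ,μ]}(x,y) attached to λ = (λ₁,…,λ_l), μ = (μ₁,…,μ_{l'})
(`lam i` is λ_{i+1}, `mu i` is μ_{i+1}): the determinant whose row i (1-based), for
1 ≤ i ≤ l', has entries q_{μ_{l'-i+1}+i-j}(y), and for l'+1 ≤ i ≤ l+l' has entries
p_{λ_{i-l'}-i+j}(x), j = 1,…,l+l'. -/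
def ucChar (l l' : ℕ) (lam : Fin l → ℕ) (mu : Fin l' → ℕ) : R2 :=
  Matrix.det (Matrix.of fun i j : Fin (l' + l) =>
    if h : (i : ℕ) < l' then
      qzy ((mu ⟨l' - 1 - (i : ℕ), by omega⟩ : ℕ) + (i : ℤ) - (j : ℤ))
    else
      pzx ((lam ⟨(i : ℕ) - l', by have := i.isLt; omega⟩ : ℕ) - (i : ℤ) + (j : ℤ)))

/-- The staircase partition k! = (k, k−1, …, 2, 1). -/
def stc (k : ℕ) : Fin k → ℕ := fun i => k - (i : ℕ)

/-- The modified staircase (k+2, k−1, k−2, …, 2, 1) (length k). -/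
def stcP (k : ℕ) : Fin k → ℕ := fun i => if (i : ℕ) = 0 then k + 2 else k - (i : ℕ)

/-!
All six characters are determinants of the matrix of `S_{[u!,v!]}` with its rows `v - 1` and `v`
(the last `q`-row and the first `p`-row) replaced by two of the four rows `Q_{v-1}, Q_v, P_{v-1},
P_v`: shifting the staircases or raising their first parts by two changes exactly these rows. The
identity is therefore the three-term Plücker relation for `D(x, y) = det (M with rows x, y)`. That
relation holds over any commutative ring by Cramer's rule: `D(a, b) • x` is a combination of the
rows of the matrix whose rows are `a, b` and the fixed rows of `M`, and substituting it into the
first slot of `D(·, y)` kills the fixed rows, leaving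
`D(a, b) D(x, y) = D(x, b) D(a, y) + D(a, x) D(b, y)`.
-/

namespace Matrix

variable {R n : Type*} [CommRing R] [Fintype n] [DecidableEq n]

theorem det_smul_eq_sum_det_updateRow_smul (A : Matrix n n R) (x : n → R) :
    A.det • x = ∑ i, (A.updateRow i x).det • A i := by
  ext j
  have h := congrFun (mulVec_cramer Aᵀ x) j
  simp only [mulVec, dotProduct, transpose_apply, cramer_transpose_apply, det_transpose] at h
  simp [← h, Finset.sum_apply, mul_comm]

theorem det_eq_det_of_entries {m N : ℕ} (h : m = N) (A : Matrix (Fin m) (Fin m) R)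
    (B : Matrix (Fin N) (Fin N) R)
    (hAB : ∀ i j (hi : i < m) (hj : j < m), A ⟨i, hi⟩ ⟨j, hj⟩ = B ⟨i, h ▸ hi⟩ ⟨j, h ▸ hj⟩) :
    A.det = B.det := by
  subst h
  exact congrArg det (Matrix.ext fun i j => hAB i j i.2 j.2)

def twoRowDet (M : Matrix n n R) (r s : n) (x y : n → R) : R :=
  ((M.updateRow r x).updateRow s y).det

section twoRowDet

variable (M : Matrix n n R) {r s : n}

theorem det_eq_twoRowDet {M' : Matrix n n R} (h : ∀ i, i ≠ r → i ≠ s → M' i = M i) :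
    M'.det = twoRowDet M r s (M' r) (M' s) := by
  refine congrArg det (Matrix.ext fun i j => ?_)
  by_cases his : i = s
  · simp [his]
  by_cases hir : i = r
  · simp [hir, updateRow_ne (hir ▸ his)]
  · simp [updateRow_ne hir, updateRow_ne his, h i hir his]

theorem twoRowDet_swap (hrs : r ≠ s) (x y : n → R) :
    twoRowDet M r s y x = -twoRowDet M r s x y := by
  have hperm : (M.updateRow r y).updateRow s x =
      ((M.updateRow r x).updateRow s y).submatrix (Equiv.swap r s) id := by
    ext i j
    rcases eq_or_ne i r with rfl | hir
    · simp [hrs]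
    rcases eq_or_ne i s with rfl | his
    · simp [hrs]
    · simp [Equiv.swap_apply_of_ne_of_ne hir his, updateRow_ne hir, updateRow_ne his]
  rw [twoRowDet, hperm, det_permute, Equiv.Perm.sign_swap hrs, twoRowDet]
  simp

theorem twoRowDet_mul_twoRowDet (hrs : r ≠ s) (a b x y : n → R) :
    twoRowDet M r s a b * twoRowDet M r s x y =
      twoRowDet M r s x b * twoRowDet M r s a y + twoRowDet M r s a x * twoRowDet M r s b y := by
  set N := (M.updateRow r a).updateRow s b
  have hN : ∀ z, ((M.updateRow s y).updateRow r z).det = twoRowDet M r s z y := fun z => by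
    rw [twoRowDet, updateRow_comm _ hrs]
  have hNr : (N.updateRow r x).det = twoRowDet M r s x b := by
    rw [twoRowDet, updateRow_comm _ hrs.symm, updateRow_idem]
  have hNs : (N.updateRow s x).det = twoRowDet M r s a x := by
    rw [updateRow_idem]; rfl
  calc twoRowDet M r s a b * twoRowDet M r s x y
      = ((M.updateRow s y).updateRow r (N.det • x)).det := by
        rw [det_updateRow_smul, hN]; rfl
    _ = ∑ i, (N.updateRow i x).det * ((M.updateRow s y).updateRow r (N i)).det := by
        rw [det_smul_eq_sum_det_updateRow_smul]
        exact (detRowAlternating.map_update_sum _ r _ _).trans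
          (Finset.sum_congr rfl fun i _ => detRowAlternating.map_update_smul _ r _ _)
    _ = _ := by
        rw [Fintype.sum_eq_add r s hrs, hNr, hNs, hN, hN]
        · simp [N, updateRow_ne hrs]
        · rintro i ⟨hir, his⟩
          rw [show N i = M i by simp [N, updateRow_ne hir, updateRow_ne his]]
          exact mul_eq_zero_of_right _
            (det_zero_of_row_eq hir (by simp [updateRow_ne hir, updateRow_ne his]))

theorem twoRowDet_pluecker (hrs : r ≠ s) (a b c d : n → R) :
    twoRowDet M r s a b * twoRowDet M r s c d - twoRowDet M r s a c * twoRowDet M r s b d +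
      twoRowDet M r s a d * twoRowDet M r s b c = 0 := by
  rw [twoRowDet_mul_twoRowDet M hrs a b c d, twoRowDet_swap M hrs b c]
  ring

end twoRowDet

end Matrix

open Matrix

section Staircase

variable {N : ℕ}

def qRow (i : ℕ) : Fin N → R2 := fun j => qzy (2 * (i : ℤ) + 1 - j)

def pRow (i : ℕ) : Fin N → R2 := fun j => pzx ((N : ℤ) - 2 * (i : ℤ) + j)

def stairMatrix (N v : ℕ) : Matrix (Fin N) (Fin N) R2 :=
  Matrix.of fun i => if (i : ℕ) < v then qRow i else pRow i

theorem stairMatrix_apply (v : ℕ) (i : Fin N) :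
    stairMatrix N v i = if (i : ℕ) < v then qRow i else pRow i :=
  rfl

theorem ucChar_stc_stc {l l' : ℕ} (h : l' + l = N) :
    ucChar l l' (stc l) (stc l') = (stairMatrix N l').det := by
  refine det_eq_det_of_entries h _ _ fun i j hi hj => ?_
  simp only [of_apply, stairMatrix, stc]
  split_ifs <;> simp only [qRow, pRow] <;> congr 1 <;> omega

theorem ucChar_eq_twoRowDet {u v : ℕ} (hu : 1 ≤ u) (hv : 1 ≤ v) {lam : Fin u → ℕ}
    {mu : Fin v → ℕ} (hlam : ∀ i : Fin u, (i : ℕ) ≠ 0 → lam i = u - i)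
    (hmu : ∀ i : Fin v, (i : ℕ) ≠ 0 → mu i = v - i) {m k : ℕ}
    (hm : (mu ⟨0, hv⟩ : ℤ) + v - 1 = 2 * m + 1) (hk : (lam ⟨0, hu⟩ : ℤ) - v = u + v - 2 * k) :
    ucChar u v lam mu =
      twoRowDet (stairMatrix (v + u) v) ⟨v - 1, by omega⟩ ⟨v, by omega⟩ (qRow m) (pRow k) := by
  have hmu' : ∀ i (hi : i < v),
      (mu ⟨i, hi⟩ : ℤ) = if i = 0 then 2 * (m : ℤ) + 2 - v else v - i := by
    intro i hi
    split_ifs with h0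
    · subst h0; omega
    · rw [hmu ⟨i, hi⟩ h0, Fin.val_mk]; omega
  have hlam' : ∀ i (hi : i < u),
      (lam ⟨i, hi⟩ : ℤ) = if i = 0 then (u : ℤ) + 2 * v - 2 * k else u - i := by
    intro i hi
    split_ifs with h0
    · subst h0; omega
    · rw [hlam ⟨i, hi⟩ h0, Fin.val_mk]; omega
  refine det_eq_det_of_entries rfl _ _ fun i j hi hj => ?_
  simp only [of_apply, updateRow_apply, stairMatrix, Fin.mk.injEq]
  split_ifs <;> simp only [qRow, pRow, hmu', hlam'] <;> congr 1 <;> split_ifs <;> omega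

theorem det_stairMatrix_pred {v : ℕ} (hvN : v < N) :
    (stairMatrix N (v - 1)).det =
      twoRowDet (stairMatrix N v) ⟨v - 1, by omega⟩ ⟨v, hvN⟩ (pRow (v - 1)) (pRow v) := by
  rw [det_eq_twoRowDet (stairMatrix N v) (r := ⟨v - 1, by omega⟩) (s := ⟨v, hvN⟩)
    fun i hir his => ?_]
  · simp [stairMatrix_apply, Nat.not_lt.mpr (Nat.sub_le v 1)]
  · simp only [stairMatrix_apply, ne_eq, Fin.ext_iff] at hir his ⊢
    split_ifs <;> first | rfl | omega

theorem det_stairMatrix_succ {v : ℕ} (hvN : v < N) :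
    (stairMatrix N (v + 1)).det =
      twoRowDet (stairMatrix N v) ⟨v - 1, by omega⟩ ⟨v, hvN⟩ (qRow (v - 1)) (qRow v) := by
  rw [det_eq_twoRowDet (stairMatrix N v) (r := ⟨v - 1, by omega⟩) (s := ⟨v, hvN⟩)
    fun i hir his => ?_]
  · simp [stairMatrix_apply]
  · simp only [stairMatrix_apply, ne_eq, Fin.ext_iff] at hir his ⊢
    split_ifs <;> first | rfl | omega

end Staircase

/-- S_{[(u+1)!,(v−1)!]}·S_{[(u−1)!,(v+1)!]}
− S_{[u!,(v+2,v−1,…,1)]}·S_{[(u+2,u−1,…,1),v!]}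
+ S_{[(u+2,u−1,…,1),(v+2,v−1,…,1)]}·S_{[u!,v!]} = 0. -/
theorem stmt16 (u v : ℕ) (hu : 1 ≤ u) (hv : 1 ≤ v) :
    ucChar (u + 1) (v - 1) (stc (u + 1)) (stc (v - 1)) *
        ucChar (u - 1) (v + 1) (stc (u - 1)) (stc (v + 1)) -
      ucChar u v (stc u) (stcP v) * ucChar u v (stcP u) (stc v) +
      ucChar u v (stcP u) (stcP v) * ucChar u v (stc u) (stc v) = 0 := by
  have hvN : v < v + u := by omega
  have hrs : (⟨v - 1, by omega⟩ : Fin (v + u)) ≠ ⟨v, hvN⟩ := by simp [Fin.ext_iff]; omega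
  have hstc : ∀ k (i : Fin k), (i : ℕ) ≠ 0 → stc k i = k - i := fun _ _ _ => rfl
  have hstcP : ∀ k (i : Fin k), (i : ℕ) ≠ 0 → stcP k i = k - i := fun _ _ h => if_neg h
  rw [ucChar_stc_stc (l := u + 1) (N := v + u) (by omega), det_stairMatrix_pred hvN,
    ucChar_stc_stc (l := u - 1) (N := v + u) (by omega), det_stairMatrix_succ hvN,
    ucChar_eq_twoRowDet hu hv (hstc u) (hstc v) (m := v - 1) (k := v)
      (by simp [stc]; omega) (by simp [stc]; ring),
    ucChar_eq_twoRowDet hu hv (hstc u) (hstcP v) (m := v) (k := v)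
      (by simp [stcP]; ring) (by simp [stc]; ring),
    ucChar_eq_twoRowDet hu hv (hstcP u) (hstc v) (m := v - 1) (k := v - 1)
      (by simp [stc]; omega) (by simp [stcP]; omega),
    ucChar_eq_twoRowDet hu hv (hstcP u) (hstcP v) (m := v) (k := v - 1)
      (by simp [stcP]; ring) (by simp [stcP]; omega)]
  linear_combination
    twoRowDet_pluecker _ hrs (qRow (v - 1)) (qRow v) (pRow (v - 1)) (pRow v)
end
end

section
/- Let X_n, Y_n (n ∈ ℤ) be the Fourier coefficients of the vertex operators X(k) = exp(∑_{m≥1}(x_m − (1/m)∂/∂y_m)k^m)·exp(−∑_{m≥1}(1/m)(∂/∂x_m)k^{−m}) = ∑_n X_n k^n and Y(k) = ∑_n Y_n k^{−n} (the same with x and y exchanged, k replaced by k^{−1}). Then for all m, n ∈ ℤ: X_m X_n + X_{n−1} X_{m+1} = 0, Y_m Y_n + Y_{n−1} Y_{m+1} = 0, and [X_m, Y_n] = 0; in particular X_n X_{n+1} = 0 and Y_n Y_{n+1} = 0. -/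
open PowerSeries Finset MvPolynomial

noncomputable section

/-- The Taylor-shift substitution common to both vertex operators: the ℚ-algebra map
R2 → R2[k,k⁻¹] sending xₘ ↦ xₘ − k^{−m}/m and yₘ ↦ yₘ − k^m/m; it realizes
exp(−ξ(∂̃_y,k))·exp(−ξ(∂̃_x,k⁻¹)) acting on polynomials, with `AddMonoidAlgebra.single e 1`
playing the role of kᵉ. -/
def shiftOp : R2 →ₐ[ℚ] AddMonoidAlgebra R2 ℤ :=
  MvPolynomial.aeval fun v =>
    match v with
    | Sum.inl m => AddMonoidAlgebra.single 0 (MvPolynomial.X (Sum.inl m)) -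
        (m : ℚ)⁻¹ • AddMonoidAlgebra.single (-(m : ℤ)) 1
    | Sum.inr m => AddMonoidAlgebra.single 0 (MvPolynomial.X (Sum.inr m)) -
        (m : ℚ)⁻¹ • AddMonoidAlgebra.single ((m : ℤ)) 1

/-- X_n, the coefficient of kⁿ in the vertex operator
X(k) = exp(ξ(x−∂̃_y,k))·exp(−ξ(∂̃_x,k⁻¹)) = (∑_a p_a(x) k^a)·(Taylor shift). -/
def opXv (n : ℤ) (f : R2) : R2 :=
  Finsupp.sum (shiftOp f).coeff fun e c => pzx (n - e) * c

/-- Y_n, the coefficient of k⁻ⁿ in the vertex operator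
Y(k) = exp(ξ(y−∂̃_x,k⁻¹))·exp(−ξ(∂̃_y,k)) = (∑_a q_a(y) k^{−a})·(Taylor shift). -/
def opYv (n : ℤ) (f : R2) : R2 :=
  Finsupp.sum (shiftOp f).coeff fun e c => qzy (n + e) * c

/-!
The Taylor shift `shiftOp` maps `exp ξ(x, z)` to `exp ξ(x - [k⁻¹], z) = (1 - z/k) exp ξ(x, z)`,
so it sends `pₐ` to `pₐ - k⁻¹ pₐ₋₁`, and likewise `qₐ` to `qₐ - k qₐ₋₁`. Both facts are
proved from the Newton recurrence `n pₙ = ∑ i xᵢ pₙ₋ᵢ`, which determines the sequence.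
Consequently a product of two modes, such as `X_m X_n f`, is the pairing of the twice-shifted
`f ∈ R2[k₁^±, k₂^±]` against an explicit kernel `K(e₁, e₂)` built from the `p`'s. The double
shift is symmetric in `k₁` and `k₂`, and swapping `e₁` and `e₂` turns the kernel of `X_m X_n` into
minus that of `X_{n-1} X_{m+1}` (likewise for `Y`) and the kernel of `X_m Y_n` into that of
`Y_n X_m`.
-/

section Newton

variable {A B : Type*} [CommRing A] [CommRing B]

/-- `u` is the sequence with generating function `exp (∑ sₘ zᵐ / m)`, extended by zero to negative
indices; for `sₘ = m xₘ` it is `(pₙ)`. -/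
structure SatisfiesNewton (s : ℕ → A) (u : ℤ → A) : Prop where
  eq_zero_of_neg : ∀ j < 0, u j = 0
  apply_zero : u 0 = 1
  recurrence : ∀ n : ℕ, (n : A) * u n = ∑ i ∈ range n, s (i + 1) * u (n - 1 - i)

namespace SatisfiesNewton

variable {s s' : ℕ → A} {u u' : ℤ → A}

theorem map (h : SatisfiesNewton s u) (φ : A →+* B) : SatisfiesNewton (φ ∘ s) (φ ∘ u) where
  eq_zero_of_neg j hj := by simp [h.eq_zero_of_neg j hj]
  apply_zero := by simp [h.apply_zero]
  recurrence n := by simpa using congrArg φ (h.recurrence n)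

theorem unique [IsAddTorsionFree A] (h : SatisfiesNewton s u) (h' : SatisfiesNewton s' u')
    (hs : ∀ m, s (m + 1) = s' (m + 1)) : u = u' := by
  have hnat : ∀ n : ℕ, u n = u' n := by
    intro n
    induction n using Nat.strong_induction_on with
    | _ n ih =>
      rcases n with _ | n
      · simpa using h.apply_zero.trans h'.apply_zero.symm
      refine nsmul_right_injective n.succ_ne_zero ?_
      simp only [nsmul_eq_mul]
      rw [h.recurrence, h'.recurrence]
      refine sum_congr rfl fun i hi => ?_
      have hin : i ≤ n := Nat.lt_succ_iff.mp (mem_range.mp hi)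
      rw [hs, show ((n + 1 : ℕ) : ℤ) - 1 - i = ((n - i : ℕ) : ℤ) by omega, ih _ (by omega)]
  funext j
  rcases lt_or_ge j 0 with hj | hj
  · rw [h.eq_zero_of_neg j hj, h'.eq_zero_of_neg j hj]
  · lift j to ℕ using hj
    exact hnat j

/-- Multiplying the generating function by `1 - c z = exp (-∑ cᵐ zᵐ / m)` subtracts `cᵐ` from
`sₘ`. -/
theorem sub_mul_shift (h : SatisfiesNewton s u) (c : A) :
    SatisfiesNewton (fun m => s m - c ^ m) (fun j => u j - c * u (j - 1)) where
  eq_zero_of_neg j hj := by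
    rw [h.eq_zero_of_neg j hj, h.eq_zero_of_neg (j - 1) (by omega), mul_zero, sub_zero]
  apply_zero := by rw [h.apply_zero, h.eq_zero_of_neg _ (by norm_num), mul_zero, sub_zero]
  recurrence n := by
    rcases n with _ | n
    · simp
    have hlower : ∑ i ∈ range (n + 1), s (i + 1) * u ((n + 1 : ℕ) - 1 - i - 1) = n * u n := by
      rw [sum_range_succ, h.eq_zero_of_neg _ (by omega), mul_zero, add_zero, h.recurrence]
      refine sum_congr rfl fun i _ => ?_
      congr 2
      push_cast
      ring
    have htelescope : ∑ i ∈ range (n + 1),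
        (c ^ (i + 1) * u ((n + 1 : ℕ) - 1 - i) -
          c ^ (i + 1 + 1) * u ((n + 1 : ℕ) - 1 - (i + 1 : ℕ))) = c * u n := by
      rw [sum_range_sub' (fun i => c ^ (i + 1) * u ((n + 1 : ℕ) - 1 - i)),
        h.eq_zero_of_neg ((n + 1 : ℕ) - 1 - (n + 1 : ℕ)) (by omega)]
      simp
    calc ((n + 1 : ℕ) : A) * (u (n + 1 : ℕ) - c * u ((n + 1 : ℕ) - 1))
        = (n + 1 : ℕ) * u (n + 1 : ℕ) - c * (n * u n) - c * u n := by push_cast; ring_nf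
      _ = _ := by
        rw [h.recurrence, ← hlower, ← htelescope, mul_sum, ← sum_sub_distrib, ← sum_sub_distrib]
        refine sum_congr rfl fun i _ => ?_
        push_cast
        ring_nf

theorem map_eq_sub_mul [IsAddTorsionFree B] (h : SatisfiesNewton s u) (φ ι : A →+* B) (c : B)
    (hφ : ∀ m, φ (s (m + 1)) = ι (s (m + 1)) - c ^ (m + 1)) (j : ℤ) :
    φ (u j) = ι (u j) - c * ι (u (j - 1)) :=
  congrFun ((h.map φ).unique ((h.map ι).sub_mul_shift c) hφ) j

end SatisfiesNewton

end Newton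

section ExpNewton

variable {A : Type*} [CommRing A]

theorem coeff_X_mul_derivative (f : PowerSeries A) (n : ℕ) :
    PowerSeries.coeff n (PowerSeries.X * d⁄dX A f) = n * PowerSeries.coeff n f := by
  rcases n with _ | n
  · simp
  · rw [coeff_succ_X_mul, coeff_derivative, mul_comm]
    push_cast
    rfl

variable [Algebra ℚ A]

def expTrunc (f : PowerSeries A) (N : ℕ) : PowerSeries A :=
  ∑ k ∈ range N, (k.factorial : ℚ)⁻¹ • f ^ k

theorem coeff_expPS_eq_coeff_expTrunc {f : PowerSeries A} (hf : constantCoeff f = 0) {n N : ℕ}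
    (hn : n < N) : PowerSeries.coeff n (expPS f) = PowerSeries.coeff n (expTrunc f N) := by
  rw [expPS, coeff_mk, expTrunc, map_sum]
  refine sum_subset (range_subset_range.mpr hn) fun k hkN hkn => ?_
  have hk : n < k := by simp at hkn; omega
  rw [X_pow_dvd_iff.mp (pow_dvd_pow_of_dvd (X_dvd_iff.mpr hf) k) n hk, smul_zero]

theorem derivative_expTrunc_succ (f : PowerSeries A) (N : ℕ) :
    d⁄dX A (expTrunc f (N + 1)) = d⁄dX A f * expTrunc f N := by
  rw [expTrunc, expTrunc, map_sum, sum_range_succ', mul_sum]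
  simp only [map_rat_smul, Derivation.leibniz_pow, pow_zero, Derivation.map_one_eq_zero,
    smul_zero, add_zero]
  refine sum_congr rfl fun k _ => ?_
  rw [Nat.add_sub_cancel, smul_eq_mul, mul_smul_comm, ← Nat.cast_smul_eq_nsmul ℚ, smul_smul,
    Nat.factorial_succ, Nat.cast_mul, mul_inv, mul_right_comm,
    inv_mul_cancel₀ (by positivity), one_mul, mul_comm (f ^ k)]

theorem natCast_mul_coeff_expPS {f : PowerSeries A} (hf : constantCoeff f = 0) (n : ℕ) :
    (n : A) * PowerSeries.coeff n (expPS f) = ∑ i ∈ range n,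
      ((i + 1 : ℕ) * PowerSeries.coeff (i + 1) f) * PowerSeries.coeff (n - (i + 1)) (expPS f) := by
  calc (n : A) * PowerSeries.coeff n (expPS f)
      = PowerSeries.coeff n (PowerSeries.X * d⁄dX A f * expTrunc f (n + 1)) := by
        rw [coeff_expPS_eq_coeff_expTrunc hf (by omega : n < n + 2), ← coeff_X_mul_derivative,
          derivative_expTrunc_succ, mul_assoc]
    _ = _ := by
        rw [PowerSeries.coeff_mul, Nat.sum_antidiagonal_eq_sum_range_succ
          (fun i j => PowerSeries.coeff i (PowerSeries.X * d⁄dX A f) *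
            PowerSeries.coeff j (expTrunc f (n + 1))), sum_range_succ']
        simp only [coeff_X_mul_derivative, Nat.cast_zero, zero_mul, add_zero]
        refine sum_congr rfl fun i hi => ?_
        rw [coeff_expPS_eq_coeff_expTrunc hf (N := n + 1) (by omega)]

theorem satisfiesNewton_expPS {f : PowerSeries A} (hf : constantCoeff f = 0) :
    SatisfiesNewton (fun m => (m : A) * PowerSeries.coeff m f)
      (fun j => if j < 0 then 0 else PowerSeries.coeff j.toNat (expPS f)) where
  eq_zero_of_neg j hj := if_pos hj
  apply_zero := by simp [expPS]
  recurrence n := by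
    simp only [Nat.cast_nonneg, not_lt.mpr, if_false, Int.toNat_natCast]
    rw [natCast_mul_coeff_expPS hf]
    refine sum_congr rfl fun i hi => ?_
    have hin : i < n := mem_range.mp hi
    rw [if_neg (by omega), show ((n : ℤ) - 1 - i).toNat = n - (i + 1) by omega]

end ExpNewton

section VertexOperators

open AddMonoidAlgebra

section Coefficients

variable {k G H : Type*} [CommRing k]

theorem natCast_mul_single_sub_inv_smul [Algebra ℚ k] [AddMonoid G] {m : ℕ} (hm : m ≠ 0)
    (r : k) (g : G) :
    (m : AddMonoidAlgebra k G) * (single 0 r - (m : ℚ)⁻¹ • single g 1) =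
      single 0 (m * r) - single g 1 := by
  rw [mul_sub, mul_smul_comm, ← nsmul_eq_mul m (single g 1), ← Nat.cast_smul_eq_nsmul ℚ, smul_smul,
    inv_mul_cancel₀ (by exact_mod_cast hm), one_smul, natCast_def, single_mul_single, zero_add]

def pairing (F : G → k) : AddMonoidAlgebra k G →ₗ[k] k :=
  (Finsupp.lsum k fun e => LinearMap.mulLeft k (F e)) ∘ₗ (coeffLinearEquiv k).toLinearMap

theorem pairing_apply (F : G → k) (g : AddMonoidAlgebra k G) :
    pairing F g = g.coeff.sum fun e c => F e * c := rfl

@[simp]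
theorem pairing_single (F : G → k) (a : G) (c : k) : pairing F (single a c) = F a * c :=
  Finsupp.sum_single_index (mul_zero _)

theorem pairing_mapDomain (F : H → k) (φ : G → H) (g : AddMonoidAlgebra k G) :
    pairing F (mapDomain φ g) = pairing (F ∘ φ) g :=
  Finsupp.sum_mapDomain_index (fun _ => mul_zero _) fun _ _ _ => mul_add _ _ _

theorem pairing_mul_sub (a b : k) (F F' : G → k) (g : AddMonoidAlgebra k G) :
    pairing (fun e => a * F e - b * F' e) g = a * pairing F g - b * pairing F' g := by
  simp only [pairing_apply, Finsupp.mul_sum, ← Finsupp.sum_sub, sub_mul, mul_assoc]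

theorem pairing_add (F F' : G → k) (g : AddMonoidAlgebra k G) :
    pairing (F + F') g = pairing F g + pairing F' g := by
  simp only [pairing_apply, Pi.add_apply, add_mul, Finsupp.sum_add]

@[simp]
theorem pairing_zero (g : AddMonoidAlgebra k G) : pairing (0 : G → k) g = 0 := by
  simp [pairing_apply]

theorem pairing_single_mul [AddMonoid G] (F : G → k) (a : G) (r : k) (g : AddMonoidAlgebra k G) :
    pairing F (single a r * g) = r * pairing (fun e => F (a + e)) g := by
  induction g using AddMonoidAlgebra.induction_linear with
  | zero => simp
  | add g g' hg hg' => rw [mul_add, map_add, hg, hg', map_add, mul_add]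
  | single b c => rw [single_mul_single, pairing_single, pairing_single]; ring

end Coefficients

theorem shiftOp_eq_of_satisfiesNewton {s : ℕ → R2} {u : ℤ → R2} (hu : SatisfiesNewton s u)
    (d : ℤ) (hs : ∀ m : ℕ, shiftOp (s (m + 1)) = single 0 (s (m + 1)) - single ((m + 1 : ℕ) * d) 1)
    (a : ℤ) : shiftOp (u a) = single 0 (u a) - single d (u (a - 1)) := by
  have : IsAddTorsionFree (AddMonoidAlgebra R2 ℤ) := .of_module_rat _
  have := hu.map_eq_sub_mul shiftOp.toRingHom singleZeroRingHom (single d 1) fun m => by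
    simp [hs]
  simpa [single_mul_single] using this a

theorem satisfiesNewton_pzx : SatisfiesNewton (fun m => (m : R2) * X (Sum.inl m)) pzx := by
  have hs : (fun m : ℕ => (m : R2) * PowerSeries.coeff m xiX) =
      fun m : ℕ => (m : R2) * X (Sum.inl m) := by
    funext m
    rcases m with _ | m <;> simp [xiX]
  have h := satisfiesNewton_expPS (f := xiX) (by simp [xiX])
  rw [hs] at h
  exact h

theorem satisfiesNewton_qzy : SatisfiesNewton (fun m => (m : R2) * X (Sum.inr m)) qzy := by
  have hs : (fun m : ℕ => (m : R2) * PowerSeries.coeff m xiY) =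
      fun m : ℕ => (m : R2) * X (Sum.inr m) := by
    funext m
    rcases m with _ | m <;> simp [xiY]
  have h := satisfiesNewton_expPS (f := xiY) (by simp [xiY])
  rw [hs] at h
  exact h

theorem shiftOp_pzx (a : ℤ) : shiftOp (pzx a) = single 0 (pzx a) - single (-1) (pzx (a - 1)) := by
  refine shiftOp_eq_of_satisfiesNewton satisfiesNewton_pzx (-1) (fun m => ?_) a
  rw [map_mul, map_natCast, shiftOp, aeval_X, ← natCast_mul_single_sub_inv_smul m.succ_ne_zero,
    mul_neg_one]

theorem shiftOp_qzy (a : ℤ) : shiftOp (qzy a) = single 0 (qzy a) - single 1 (qzy (a - 1)) := by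
  refine shiftOp_eq_of_satisfiesNewton satisfiesNewton_qzy 1 (fun m => ?_) a
  rw [map_mul, map_natCast, shiftOp, aeval_X, ← natCast_mul_single_sub_inv_smul m.succ_ne_zero,
    mul_one]

/-- `single a c ↦ k₁ᵃ · (shiftOp c)(k₂)`: the first exponent is kept, the shift of the
coefficient is recorded in the second one. -/
def shiftCoeffs : AddMonoidAlgebra R2 ℤ →ₐ[ℚ] AddMonoidAlgebra R2 (ℤ × ℤ) :=
  liftNCAlgHom ((mapDomainAlgHom ℚ R2 (AddMonoidHom.inr ℤ ℤ)).comp shiftOp)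
    ((of R2 (ℤ × ℤ)).comp (AddMonoidHom.inl ℤ ℤ).toMultiplicative) fun _ _ => Commute.all _ _

def doubleShift : R2 →ₐ[ℚ] AddMonoidAlgebra R2 (ℤ × ℤ) := shiftCoeffs.comp shiftOp

theorem shiftCoeffs_single (a : ℤ) (c : R2) :
    shiftCoeffs (single a c) =
      mapDomainAlgHom ℚ R2 (AddMonoidHom.inr ℤ ℤ) (shiftOp c) * single (a, 0) 1 := by
  rw [shiftCoeffs, coe_liftNCAlgHom, liftNC_single]
  rfl

theorem pairing_shiftCoeffs (K : ℤ × ℤ → R2) (g : AddMonoidAlgebra R2 ℤ) :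
    pairing K (shiftCoeffs g) =
      g.coeff.sum fun e c => pairing (fun e' => K (e, e')) (shiftOp c) := by
  induction g using AddMonoidAlgebra.induction_linear with
  | zero => simp
  | add g g' hg hg' =>
    rw [map_add, map_add, hg, hg', AddMonoidAlgebra.coeff_add,
      Finsupp.sum_add_index' (by simp) (by simp)]
  | single a c =>
    rw [coeff_single, Finsupp.sum_single_index (by simp), shiftCoeffs_single, mul_comm,
      pairing_single_mul, one_mul, mapDomainAlgHom_apply, pairing_mapDomain]
    congr 2
    funext e
    simp

theorem doubleShift_X_of_shiftOp_X {v : ℕ ⊕ ℕ} {q : ℚ} {d : ℤ}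
    (hv : shiftOp (X v) = single 0 (X v) - q • single d 1) :
    doubleShift (X v) = single 0 (X v) - q • single (0, d) 1 - q • single (d, 0) 1 := by
  rw [doubleShift, AlgHom.comp_apply, hv, map_sub, map_smul, shiftCoeffs_single,
    shiftCoeffs_single, hv, map_one, map_one, one_mul, map_sub, map_smul]
  simp only [mapDomainAlgHom_apply, mapDomain_single, sub_mul, smul_mul_assoc, single_mul_single,
    AddMonoidHom.inr_apply, add_zero, Prod.mk_zero_zero, mul_one]

theorem mapDomain_swap_doubleShift (f : R2) :
    mapDomain Prod.swap (doubleShift f) = doubleShift f := by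
  have hsymm : ∀ {v : ℕ ⊕ ℕ} {q : ℚ} {d : ℤ},
      shiftOp (X v) = single 0 (X v) - q • single d 1 →
      mapDomainAlgHom ℚ R2 (AddEquiv.prodComm : ℤ × ℤ ≃+ ℤ × ℤ).toAddMonoidHom (doubleShift (X v)) =
        doubleShift (X v) := fun hv => by
    rw [doubleShift_X_of_shiftOp_X hv]
    simp only [map_sub, map_smul, mapDomainAlgHom_apply, mapDomain_single,
      AddEquiv.toAddMonoidHom_eq_coe, AddMonoidHom.coe_coe, AddEquiv.coe_prodComm, Prod.swap_zero,
      Prod.swap_prod_mk]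
    abel
  have := congrArg (fun φ : R2 →ₐ[ℚ] _ => φ f) <| MvPolynomial.algHom_ext (f :=
    (mapDomainAlgHom ℚ R2 (AddEquiv.prodComm : ℤ × ℤ ≃+ ℤ × ℤ).toAddMonoidHom).comp doubleShift)
    (g := doubleShift) fun (v : ℕ ⊕ ℕ) => by
      rcases v with m | m
      · exact hsymm (by rw [shiftOp, aeval_X])
      · exact hsymm (by rw [shiftOp, aeval_X])
  rwa [AlgHom.comp_apply, mapDomainAlgHom_apply] at this

theorem pairing_swap_doubleShift (K : ℤ × ℤ → R2) (f : R2) :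
    pairing (fun e => K e.swap) (doubleShift f) = pairing K (doubleShift f) := by
  conv_rhs => rw [← mapDomain_swap_doubleShift f, pairing_mapDomain]
  rfl

theorem pairing_doubleShift_add_eq_zero {K K' : ℤ × ℤ → R2} (h : ∀ a b, K (b, a) + K' (a, b) = 0)
    (f : R2) : pairing K (doubleShift f) + pairing K' (doubleShift f) = 0 := by
  rw [← pairing_swap_doubleShift K, ← pairing_add]
  convert pairing_zero _
  exact funext fun e => h e.1 e.2

theorem pairing_shiftOp_pairing_shiftOp {F G G' : ℤ → R2} {ε : ℤ}
    (hG : ∀ e, shiftOp (G e) = single 0 (G e) - single ε (G' e)) (f : R2) :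
    pairing F (shiftOp (pairing G (shiftOp f))) =
      pairing (fun e => G e.1 * F e.2 - G' e.1 * F (ε + e.2)) (doubleShift f) := by
  rw [doubleShift, AlgHom.comp_apply, pairing_shiftCoeffs, pairing_apply G, map_finsuppSum,
    map_finsuppSum]
  refine Finsupp.sum_congr fun e _ => ?_
  rw [map_mul, hG, sub_mul, map_sub, pairing_single_mul, pairing_single_mul]
  simp only [zero_add]
  exact (pairing_mul_sub _ _ _ _ _).symm

theorem opXv_opXv (m n : ℤ) (f : R2) :
    opXv m (opXv n f) = pairing (fun e => pzx (n - e.1) * pzx (m - e.2) -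
      pzx (n - 1 - e.1) * pzx (m + 1 - e.2)) (doubleShift f) := by
  rw [opXv, opXv, ← pairing_apply, ← pairing_apply,
    pairing_shiftOp_pairing_shiftOp fun e => shiftOp_pzx _]
  ring_nf

theorem opYv_opYv (m n : ℤ) (f : R2) :
    opYv m (opYv n f) = pairing (fun e => qzy (n + e.1) * qzy (m + e.2) -
      qzy (n - 1 + e.1) * qzy (m + 1 + e.2)) (doubleShift f) := by
  rw [opYv, opYv, ← pairing_apply, ← pairing_apply,
    pairing_shiftOp_pairing_shiftOp fun e => shiftOp_qzy _]
  ring_nf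

theorem opXv_opYv (m n : ℤ) (f : R2) :
    opXv m (opYv n f) = pairing (fun e => qzy (n + e.1) * pzx (m - e.2) -
      qzy (n - 1 + e.1) * pzx (m - 1 - e.2)) (doubleShift f) := by
  rw [opXv, opYv, ← pairing_apply, ← pairing_apply,
    pairing_shiftOp_pairing_shiftOp fun e => shiftOp_qzy _]
  ring_nf

theorem opYv_opXv (m n : ℤ) (f : R2) :
    opYv n (opXv m f) = pairing (fun e => pzx (m - e.1) * qzy (n + e.2) -
      pzx (m - 1 - e.1) * qzy (n - 1 + e.2)) (doubleShift f) := by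
  rw [opXv, opYv, ← pairing_apply, ← pairing_apply,
    pairing_shiftOp_pairing_shiftOp fun e => shiftOp_pzx _]
  ring_nf

end VertexOperators

/-- X_m X_n + X_{n−1} X_{m+1} = 0, Y_m Y_n + Y_{n−1} Y_{m+1} = 0,
[X_m, Y_n] = 0; in particular X_n X_{n+1} = 0 and Y_n Y_{n+1} = 0. -/
theorem stmt17 (m n : ℤ) (f : R2) :
    (opXv m (opXv n f) + opXv (n - 1) (opXv (m + 1) f) = 0) ∧
    (opYv m (opYv n f) + opYv (n - 1) (opYv (m + 1) f) = 0) ∧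
    (opXv m (opYv n f) = opYv n (opXv m f)) ∧
    (opXv n (opXv (n + 1) f) = 0) ∧ (opYv n (opYv (n + 1) f) = 0) := by
  have hXX : ∀ m n : ℤ, opXv m (opXv n f) + opXv (n - 1) (opXv (m + 1) f) = 0 := fun m n => by
    rw [opXv_opXv, opXv_opXv]
    exact pairing_doubleShift_add_eq_zero (fun a b => by ring_nf) f
  have hYY : ∀ m n : ℤ, opYv m (opYv n f) + opYv (n - 1) (opYv (m + 1) f) = 0 := fun m n => by
    rw [opYv_opYv, opYv_opYv]
    exact pairing_doubleShift_add_eq_zero (fun a b => by ring_nf) f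
  refine ⟨hXX m n, hYY m n, ?_, ?_, ?_⟩
  · rw [opXv_opYv, opYv_opXv, ← pairing_swap_doubleShift]
    congr 2
    funext e
    simp only [Prod.fst_swap, Prod.snd_swap]
    ring_nf
  · simpa only [add_sub_cancel_right, add_self_eq_zero] using hXX n (n + 1)
  · simpa only [add_sub_cancel_right, add_self_eq_zero] using hYY n (n + 1)
end
end
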